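/- Let m ∈ ℤ_{>0}, t₁,…,t_m ∈ ℂ, μ ∈ ℂ, z₁,…,z_{2m} ∈ ℂ, set f(x) = ∏_{j=1}^m θ(x−t_j,τ), and let g : ℂ → ℂ be entire. Suppose that Wr(f,g)(x) = e^{−2πiμx}∏_{a=1}^{2m}θ(x−z_a,τ) for all x, and that f and Wr(f,g) have no common zero. Then the t_j are pairwise non-congruent modulo ℤ+τℤ, t_j − z_a ∉ ℤ+τℤ for all j, a, and (μ, t₁,…,t_m, z₁,…,z_{2m}) satisfies the Bethe ansatz equations 2πiμ + 2∑_{k≠j}ρ(t_j−t_k,τ) − ∑_{a=1}^{2m}ρ(t_j−z_a,τ) = 0 for all j = 1,…,m. -/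

import Mathlib

noncomputable section

open Complex

/-- `π` as a complex number. -/
def piC : ℂ := Real.pi

/-- The nome `q = e^{2πiτ}`. -/
def qpar (τ : ℂ) : ℂ := Complex.exp (2 * piC * Complex.I * τ)

/-- The normalized first Jacobi theta function
`θ(x,τ) = (sin(πx)/π) ∏_{j≥1} (1-q^j e^{2πix})(1-q^j e^{-2πix})(1-q^j)^{-2}`. -/
def Theta (τ x : ℂ) : ℂ :=
  (Complex.sin (piC * x) / piC) *
    ∏' j : ℕ,
      ((1 - qpar τ ^ (j + 1) * Complex.exp (2 * piC * Complex.I * x)) *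
        (1 - qpar τ ^ (j + 1) * Complex.exp (-(2 * piC * Complex.I * x))) *
        ((1 - qpar τ ^ (j + 1))⁻¹) ^ 2)

/-- `ρ(x,τ) = θ'(x,τ)/θ(x,τ)` (derivative in `x`). -/
def rho (τ x : ℂ) : ℂ := deriv (Theta τ) x / Theta τ x

/-- `σ(x,w,τ) = θ(x+w,τ)/(θ(x,τ)θ(w,τ))`. -/
def sigmaF (τ x w : ℂ) : ℂ := Theta τ (x + w) / (Theta τ x * Theta τ w)

/-- `φ(x,w,τ) = ∂_x σ(w,−x,τ)`. -/
def phiF (τ x w : ℂ) : ℂ := deriv (fun y => sigmaF τ w (-y)) x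

/-- `η(x,τ) = ρ(x,τ)² + ρ'(x,τ)`. -/
def etaF (τ x : ℂ) : ℂ := rho τ x ^ 2 + deriv (rho τ) x

/-- Membership in the lattice `ℤ + τℤ`. -/
def InLat (τ z : ℂ) : Prop := ∃ k l : ℤ, z = (k : ℂ) + (l : ℂ) * τ


/-- The Wronskian `Wr(f,g) = f·g' − f'·g`. -/
def Wron (f g : ℂ → ℂ) : ℂ → ℂ := fun x => f x * deriv g x - deriv f x * g x

/-- The Bethe ansatz equations for `(μ, t₁,…,t_m, z₁,…,z_{2m})`:
`2πiμ + 2∑_{k≠j} ρ(t_j−t_k,τ) − ∑_a ρ(t_j−z_a,τ) = 0` for `j = 1,…,m`. -/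
def BAE (τ : ℂ) (m : ℕ) (μ : ℂ) (t : Fin m → ℂ) (z : Fin (2 * m) → ℂ) : Prop :=
  ∀ j : Fin m,
    2 * piC * Complex.I * μ + 2 * ∑ k ∈ Finset.univ.erase j, rho τ (t j - t k)
      - ∑ a, rho τ (t j - z a) = 0

/-!
At a zero `t_j` of `f` we have `Wr = -f' g` and `Wr' = f g'' - f'' g = -f'' g`, so
`Wr'/Wr = f''/f'` there. Writing `f(x) = θ(x - t_j) h(x)` with `θ` odd, so that
`θ(0) = θ''(0) = 0`, gives `f'(t_j) = θ'(0) h(t_j)` and `f''(t_j) = 2 θ'(0) h'(t_j)`, hence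
`Wr'/Wr (t_j) = 2 h'/h (t_j) = 2 ∑_{k ≠ j} ρ(t_j - t_k)`. The factorization
`Wr = e^{-2πiμx} ∏_a θ(x - z_a)` gives `Wr'/Wr (t_j) = -2πiμ + ∑_a ρ(t_j - z_a)` instead.
The non-congruences hold because `θ` vanishes on `ℤ + τℤ`, while `Wr(t_j) ≠ 0` forces
`h(t_j) ≠ 0` and `∏_a θ(t_j - z_a) ≠ 0`.
-/

namespace Function

variable {𝕜 F : Type*} [NontriviallyNormedField 𝕜] [NormedAddCommGroup F] [NormedSpace 𝕜 F]
  {f : 𝕜 → F}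

theorem Odd.deriv (hf : f.Odd) : (deriv f).Even := fun x => by
  have h := deriv_comp_neg (f := f) (x := x)
  rw [show (fun y => f (-y)) = fun y => -f y from funext hf, deriv.fun_neg] at h
  exact neg_injective h.symm

theorem Even.deriv (hf : f.Even) : (deriv f).Odd := fun x => by
  have h := deriv_comp_neg (f := f) (x := x)
  rw [show (fun y => f (-y)) = f from funext hf] at h
  rw [h, neg_neg]

end Function

section Theta

variable {τ : ℂ}

def thetaFactor (τ x : ℂ) (n : ℕ) : ℂ :=
  (1 - qpar τ ^ (n + 1) * exp (2 * piC * I * x)) *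
    (1 - qpar τ ^ (n + 1) * exp (-(2 * piC * I * x))) * ((1 - qpar τ ^ (n + 1))⁻¹) ^ 2

theorem Theta_eq_mul_tprod (τ x : ℂ) :
    Theta τ x = sin (piC * x) / piC * ∏' n, thetaFactor τ x n := rfl

theorem norm_qpar_lt_one (hτ : 0 < τ.im) : ‖qpar τ‖ < 1 := by
  rw [qpar, norm_exp, Real.exp_lt_one_iff]
  have := Real.pi_pos
  simp only [piC, mul_re, mul_im, ofReal_re, ofReal_im, I_re, I_im, re_ofNat, im_ofNat]
  nlinarith

theorem thetaFactor_sub_one {x : ℂ} (n : ℕ) (h : 1 - qpar τ ^ (n + 1) ≠ 0) :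
    thetaFactor τ x n - 1 = qpar τ ^ (n + 1) *
      (2 - exp (2 * piC * I * x) - exp (-(2 * piC * I * x))) / (1 - qpar τ ^ (n + 1)) ^ 2 := by
  have hexp : exp (2 * piC * I * x) * exp (-(2 * piC * I * x)) = 1 := by
    rw [← exp_add, add_neg_cancel, exp_zero]
  rw [thetaFactor]
  field_simp
  linear_combination (qpar τ ^ (n + 1)) ^ 2 * hexp

theorem norm_thetaFactor_sub_one_le (hτ : 0 < τ.im) (n : ℕ) {R : ℝ} {x : ℂ} (hx : ‖x‖ ≤ R) :
    ‖thetaFactor τ x n - 1‖ ≤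
      ‖qpar τ‖ ^ n * (2 + 2 * Real.exp (2 * Real.pi * R)) / (1 - ‖qpar τ‖) ^ 2 := by
  have hr : ‖qpar τ‖ < 1 := norm_qpar_lt_one hτ
  have hpow : ‖qpar τ ^ (n + 1)‖ ≤ ‖qpar τ‖ ^ n := by
    rw [norm_pow]; exact pow_le_pow_of_le_one (norm_nonneg _) hr.le n.le_succ
  have hden : 1 - ‖qpar τ‖ ≤ ‖1 - qpar τ ^ (n + 1)‖ := by
    have := norm_sub_norm_le (1 : ℂ) (qpar τ ^ (n + 1))
    rw [norm_one, norm_pow] at this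
    linarith [pow_le_of_le_one (norm_nonneg (qpar τ)) hr.le (n := n + 1) (by omega)]
  have hexp : ∀ w : ℂ, ‖w‖ = 2 * Real.pi * ‖x‖ → ‖exp w‖ ≤ Real.exp (2 * Real.pi * R) :=
    fun w hw => (norm_exp_le_exp_norm w).trans
      (Real.exp_le_exp.mpr (hw ▸ by gcongr))
  have hnum : ‖2 - exp (2 * piC * I * x) - exp (-(2 * piC * I * x))‖ ≤
      2 + 2 * Real.exp (2 * Real.pi * R) := by
    have h1 := hexp (2 * piC * I * x) (by simp [piC, Real.pi_pos.le])
    have h2 := hexp (-(2 * piC * I * x)) (by simp [piC, Real.pi_pos.le])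
    have h3 := norm_sub_le (2 - exp (2 * piC * I * x)) (exp (-(2 * piC * I * x)))
    have h4 := norm_sub_le (2 : ℂ) (exp (2 * piC * I * x))
    norm_num at h4
    linarith
  rw [thetaFactor_sub_one n (norm_pos_iff.mp (by linarith)), norm_div, norm_mul,
    norm_pow (1 - _)]
  gcongr

theorem differentiableOn_tprod_thetaFactor (hτ : 0 < τ.im) (R : ℝ) :
    DifferentiableOn ℂ (fun x => ∏' n, thetaFactor τ x n) (Metric.ball 0 R) := by
  have hu : Summable fun n : ℕ =>
      ‖qpar τ‖ ^ n * (2 + 2 * Real.exp (2 * Real.pi * R)) / (1 - ‖qpar τ‖) ^ 2 :=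
    ((summable_geometric_of_lt_one (norm_nonneg _) (norm_qpar_lt_one hτ)).mul_right _).div_const _
  have hprod := hu.hasProdLocallyUniformlyOn_nat_one_add (f := fun n x => thetaFactor τ x n - 1)
    Metric.isOpen_ball
    (.of_forall fun n x hx => norm_thetaFactor_sub_one_le hτ n (mem_ball_zero_iff.mp hx).le)
    (fun n => by unfold thetaFactor; fun_prop)
  simp only [add_sub_cancel] at hprod
  exact hprod.differentiableOn (.of_forall fun s => by unfold thetaFactor; fun_prop)
    Metric.isOpen_ball

theorem differentiable_Theta (hτ : 0 < τ.im) : Differentiable ℂ (Theta τ) := fun x =>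
  (by fun_prop : DifferentiableAt ℂ (fun x => sin (piC * x) / piC) x).mul
    ((differentiableOn_tprod_thetaFactor hτ (‖x‖ + 1)).differentiableAt
      (Metric.isOpen_ball.mem_nhds (by simp)))

theorem Theta_odd (τ : ℂ) : (Theta τ).Odd := fun x => by
  simp only [Theta_eq_mul_tprod, thetaFactor, mul_neg, neg_neg, sin_neg, neg_div, neg_mul]
  congr 2
  exact tprod_congr fun n => by ring

theorem Theta_intCast_eq_zero (τ : ℂ) (k : ℤ) : Theta τ k = 0 := by
  rw [Theta_eq_mul_tprod, piC, mul_comm (Real.pi : ℂ), sin_int_mul_pi, zero_div, zero_mul]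

theorem thetaFactor_int_add_succ_mul_eq_zero (τ : ℂ) (k : ℤ) (n : ℕ) :
    thetaFactor τ (k + (n + 1) * τ) n = 0 := by
  have hq : qpar τ ^ (n + 1) * exp (-(2 * piC * I * (k + (n + 1) * τ))) = 1 := by
    rw [qpar, ← exp_nat_mul, ← exp_add]
    convert exp_int_mul_two_pi_mul_I (-k) using 2
    push_cast [piC]
    ring
  rw [thetaFactor, hq, sub_self, mul_zero, zero_mul]

theorem Theta_int_add_succ_mul_eq_zero (τ : ℂ) (k : ℤ) (n : ℕ) :
    Theta τ (k + (n + 1) * τ) = 0 := by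
  rw [Theta_eq_mul_tprod,
    tprod_of_exists_eq_zero ⟨n, thetaFactor_int_add_succ_mul_eq_zero τ k n⟩, mul_zero]

theorem Theta_eq_zero_of_inLat {x : ℂ} (hx : InLat τ x) : Theta τ x = 0 := by
  obtain ⟨k, l, rfl⟩ := hx
  obtain ⟨n, rfl | rfl⟩ := Int.eq_nat_or_neg l
  all_goals rcases n with _ | n
  · simpa using Theta_intCast_eq_zero τ k
  · simpa using Theta_int_add_succ_mul_eq_zero τ k n
  · simpa using Theta_intCast_eq_zero τ k
  · have := Theta_int_add_succ_mul_eq_zero τ (-k) n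
    rw [← neg_eq_zero, ← Theta_odd]
    convert this using 2
    push_cast; ring

end Theta

section Wronskian

variable {f g : ℂ → ℂ} {x : ℂ}

theorem Wron_eq_neg_of_eq_zero (hx : f x = 0) : Wron f g x = -(deriv f x * g x) := by
  simp [Wron, hx]

theorem deriv_Wron (hf : Differentiable ℂ f) (hg : Differentiable ℂ g) (x : ℂ) :
    deriv (Wron f g) x = f x * deriv (deriv g) x - deriv (deriv f) x * g x := by
  have := ((hf x).hasDerivAt.fun_mul (hg.deriv x).hasDerivAt).fun_sub
    ((hf.deriv x).hasDerivAt.fun_mul (hg x).hasDerivAt)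
  rw [show Wron f g = fun y => f y * deriv g y - deriv f y * g y from rfl, this.deriv]
  ring

theorem logDeriv_Wron_of_eq_zero (hf : Differentiable ℂ f) (hg : Differentiable ℂ g)
    (hx : f x = 0) (hW : Wron f g x ≠ 0) : logDeriv (Wron f g) x = logDeriv (deriv f) x := by
  rw [Wron_eq_neg_of_eq_zero hx, neg_ne_zero] at hW
  rw [logDeriv_apply, logDeriv_apply, deriv_Wron hf hg, Wron_eq_neg_of_eq_zero hx, hx, zero_mul,
    zero_sub, neg_div_neg_eq, mul_div_mul_right _ _ (right_ne_zero_of_mul hW)]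

end Wronskian

section OddFactor

variable {u h : ℂ → ℂ}

theorem deriv_comp_sub_mul_self (hu : Differentiable ℂ u) (hh : Differentiable ℂ h)
    (hu0 : u 0 = 0) (c : ℂ) : deriv (fun y => u (y - c) * h y) c = deriv u 0 * h c := by
  have := ((hu (c - c)).hasDerivAt.comp_sub_const c c).fun_mul (hh c).hasDerivAt
  rw [this.deriv, sub_self, hu0, zero_mul, add_zero]

theorem deriv_deriv_comp_sub_mul_self (hu : Differentiable ℂ u) (hodd : u.Odd)
    (hh : Differentiable ℂ h) (c : ℂ) :
    deriv (deriv fun y => u (y - c) * h y) c = 2 * deriv u 0 * deriv h c := by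
  have hderiv : deriv (fun y => u (y - c) * h y) =
      fun y => deriv u (y - c) * h y + u (y - c) * deriv h y := funext fun y =>
    (((hu (y - c)).hasDerivAt.comp_sub_const y c).fun_mul (hh y).hasDerivAt).deriv
  have := (((hu.deriv (c - c)).hasDerivAt.comp_sub_const c c).fun_mul (hh c).hasDerivAt).fun_add
    (((hu (c - c)).hasDerivAt.comp_sub_const c c).fun_mul (hh.deriv c).hasDerivAt)
  rw [hderiv, this.deriv, sub_self, hodd.map_zero, hodd.deriv.deriv.map_zero]
  ring

theorem logDeriv_deriv_comp_sub_mul_self (hu : Differentiable ℂ u) (hodd : u.Odd)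
    (hh : Differentiable ℂ h) (hu' : deriv u 0 ≠ 0) (c : ℂ) :
    logDeriv (deriv fun y => u (y - c) * h y) c = 2 * logDeriv h c := by
  rw [logDeriv_apply, logDeriv_apply, deriv_deriv_comp_sub_mul_self hu hodd hh,
    deriv_comp_sub_mul_self hu hh hodd.map_zero, mul_comm 2, mul_assoc,
    mul_div_mul_left _ _ hu', mul_div_assoc]

end OddFactor

theorem logDeriv_cexp_neg_mul_mul {Z : ℂ → ℂ} {x : ℂ} (ν : ℂ) (hZ : DifferentiableAt ℂ Z x)
    (hZx : Z x ≠ 0) : logDeriv (fun y => exp (-(ν * y)) * Z y) x = -ν + logDeriv Z x := by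
  have hexp : HasDerivAt (fun y => exp (-(ν * y))) (exp (-(ν * x)) * -ν) x := by
    simpa using ((hasDerivAt_id x).const_mul ν).fun_neg.cexp
  rw [logDeriv_mul (f := fun y => exp (-(ν * y))) x (exp_ne_zero _) hZx (by fun_prop) hZ,
    logDeriv_apply, hexp.deriv, mul_div_cancel_left₀ _ (exp_ne_zero _)]

theorem logDeriv_prod_Theta_sub {τ : ℂ} (hτ : 0 < τ.im) {ι : Type*} (s : Finset ι) (w : ι → ℂ)
    {x : ℂ} (hx : ∀ i ∈ s, Theta τ (x - w i) ≠ 0) :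
    logDeriv (fun y => ∏ i ∈ s, Theta τ (y - w i)) x = ∑ i ∈ s, rho τ (x - w i) := by
  have hθ := differentiable_Theta hτ
  rw [logDeriv_prod hx fun i _ => by fun_prop]
  simp only [logDeriv_apply, deriv_comp_sub_const, rho]

theorem wronskian_eq_implies_BAE_general (τ : ℂ) (hτ : 0 < τ.im) (m : ℕ) (μ : ℂ)
    (t : Fin m → ℂ) (z : Fin (2 * m) → ℂ) (g : ℂ → ℂ) (hg : Differentiable ℂ g)
    (hW : ∀ x : ℂ, Wron (fun y => ∏ j, Theta τ (y - t j)) g x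
        = Complex.exp (-(2 * piC * Complex.I * μ * x)) * ∏ a, Theta τ (x - z a))
    (hcz : ∀ x : ℂ, (∏ j, Theta τ (x - t j)) = 0 →
        Wron (fun y => ∏ j, Theta τ (y - t j)) g x ≠ 0) :
    (∀ j k, j ≠ k → ¬ InLat τ (t j - t k)) ∧
    (∀ j a, ¬ InLat τ (t j - z a)) ∧
    BAE τ m μ t z := by
  have hθ := differentiable_Theta hτ
  set f := fun y => ∏ j, Theta τ (y - t j)
  have hf : Differentiable ℂ f := by fun_prop
  set h := fun j y => ∏ k ∈ Finset.univ.erase j, Theta τ (y - t k)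
  have hfac : ∀ j, f = fun y => Theta τ (y - t j) * h j y := fun j =>
    funext fun y => (Finset.mul_prod_erase _ _ (Finset.mem_univ j)).symm
  have hzero : ∀ j, f (t j) = 0 := fun j => by simp [hfac j, (Theta_odd τ).map_zero]
  have hWne : ∀ j, Wron f g (t j) ≠ 0 := fun j => hcz (t j) (hzero j)
  have hfac_ne : ∀ j, deriv (Theta τ) 0 ≠ 0 ∧ h j (t j) ≠ 0 := fun j => by
    have := hWne j
    rw [Wron_eq_neg_of_eq_zero (hzero j), hfac j,
      deriv_comp_sub_mul_self hθ (by fun_prop) (Theta_odd τ).map_zero] at this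
    simp only [neg_ne_zero, mul_ne_zero_iff] at this
    exact this.1
  have hZ : ∀ j, ∏ a, Theta τ (t j - z a) ≠ 0 := fun j =>
    right_ne_zero_of_mul (hW (t j) ▸ hWne j)
  refine ⟨fun j k hjk hlat => ?_, fun j a hlat => ?_, fun j => ?_⟩
  · exact Finset.prod_ne_zero_iff.mp (hfac_ne j).2 k
      (Finset.mem_erase.mpr ⟨hjk.symm, Finset.mem_univ k⟩) (Theta_eq_zero_of_inLat hlat)
  · exact Finset.prod_ne_zero_iff.mp (hZ j) a (Finset.mem_univ a) (Theta_eq_zero_of_inLat hlat)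
  have hlog_z : logDeriv (Wron f g) (t j) = -(2 * piC * I * μ) + ∑ a, rho τ (t j - z a) := by
    rw [funext hW, logDeriv_cexp_neg_mul_mul _ (by fun_prop) (hZ j),
      logDeriv_prod_Theta_sub hτ _ _ (Finset.prod_ne_zero_iff.mp (hZ j))]
  have hlog_t : logDeriv (Wron f g) (t j) = 2 * ∑ k ∈ Finset.univ.erase j, rho τ (t j - t k) := by
    rw [logDeriv_Wron_of_eq_zero hf hg (hzero j) (hWne j), hfac j,
      logDeriv_deriv_comp_sub_mul_self hθ (Theta_odd τ) (by fun_prop) (hfac_ne j).1,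
      logDeriv_prod_Theta_sub hτ _ _ (Finset.prod_ne_zero_iff.mp (hfac_ne j).2)]
  linear_combination hlog_z - hlog_t

/-- if `Wr(∏_j θ(x−t_j), g) = e^{−2πiμx}∏_a θ(x−z_a)` and
`f = ∏_j θ(x−t_j)` has no common zero with the Wronskian, then the `t_j` are pairwise
non-congruent mod `ℤ+τℤ`, `t_j − z_a ∉ ℤ+τℤ`, and the Bethe ansatz equations hold. -/
theorem wronskian_eq_implies_BAE (τ : ℂ) (hτ : 0 < τ.im) (m : ℕ) (hm : 0 < m) (μ : ℂ)
    (t : Fin m → ℂ) (z : Fin (2 * m) → ℂ) (g : ℂ → ℂ) (hg : Differentiable ℂ g)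
    (hW : ∀ x : ℂ, Wron (fun y => ∏ j, Theta τ (y - t j)) g x
        = Complex.exp (-(2 * piC * Complex.I * μ * x)) * ∏ a, Theta τ (x - z a))
    (hcz : ∀ x : ℂ, (∏ j, Theta τ (x - t j)) = 0 →
        Wron (fun y => ∏ j, Theta τ (y - t j)) g x ≠ 0) :
    (∀ j k, j ≠ k → ¬ InLat τ (t j - t k)) ∧
    (∀ j a, ¬ InLat τ (t j - z a)) ∧
    BAE τ m μ t z :=
  wronskian_eq_implies_BAE_general τ hτ m μ t z g hg hW hcz

end
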